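/- arXiv:1602.06153 — 5 statements merged into one kernel-verified Lean document; each statement's English description precedes it below -/
import Mathlib

section
/- For Riemann data ρ₋ < ρ₊ in [0, ρ_max], the initial speed of the turning point, ξ̇(0) = (1/2){[v_max − v(ρ₋)]·[Υ(ρ₊) − Υ(ρ₋)] + v_max·[c(ρ₋) − c(ρ₊)]}, is strictly negative. -/
/-!
Since `Υ' = -ρ c''`, strict convexity of `c` makes `Υ` strictly decreasing on `[0, ρ_max]`, and,
together with `c'(0) ≥ 0`, makes `c` strictly increasing there. In the rearranged form of `ξ̇(0)`
the first term is then `≤ 0` (because `v ρ₋ ≤ v 0 = v_max`) and the second is `< 0`.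
-/

open Set

/-- The value at `0` of the tangent line to the graph of `c` at `ρ`; this is the paper's `Υ`. -/
noncomputable def tangentIntercept (c : ℝ → ℝ) (ρ : ℝ) : ℝ := c ρ - ρ * deriv c ρ

section

variable {c : ℝ → ℝ} {a b : ℝ}

theorem hasDerivAt_tangentIntercept {ρ : ℝ} (hc : DifferentiableAt ℝ c ρ)
    (hc' : DifferentiableAt ℝ (deriv c) ρ) :
    HasDerivAt (tangentIntercept c) (-(ρ * deriv (deriv c) ρ)) ρ :=
  (hc.hasDerivAt.sub ((hasDerivAt_id ρ).mul hc'.hasDerivAt)).congr_deriv (by simp only [id]; ring)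

theorem strictAntiOn_tangentIntercept (hc : Differentiable ℝ c)
    (hc' : Differentiable ℝ (deriv c)) (ha : 0 ≤ a)
    (hconv : ∀ ρ ∈ Ioo a b, 0 < deriv (deriv c) ρ) :
    StrictAntiOn (tangentIntercept c) (Icc a b) := by
  have hderiv ρ := hasDerivAt_tangentIntercept (hc ρ) (hc' ρ)
  refine strictAntiOn_of_deriv_neg (convex_Icc a b)
    (fun ρ _ => (hderiv ρ).continuousAt.continuousWithinAt) fun ρ hρ => ?_
  rw [interior_Icc] at hρ
  rw [(hderiv ρ).deriv, neg_lt_zero]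
  exact mul_pos (ha.trans_lt hρ.1) (hconv ρ hρ)

theorem strictMonoOn_of_strictMonoOn_deriv (hc : Differentiable ℝ c)
    (hc' : StrictMonoOn (deriv c) (Icc a b)) (ha : 0 ≤ deriv c a) : StrictMonoOn c (Icc a b) := by
  refine strictMonoOn_of_deriv_pos (convex_Icc a b) hc.continuous.continuousOn fun x hx => ?_
  rw [interior_Icc] at hx
  exact ha.trans_lt (hc' (left_mem_Icc.mpr (hx.1.trans hx.2).le) (Ioo_subset_Icc_self hx) hx.1)

end

theorem riemann_turning_point_speed_neg_general
    (ρmax vmax : ℝ) (hρmax1 : ρmax < 1)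
    (v : ℝ → ℝ) (hvanti : StrictAntiOn v (Set.Icc 0 1))
    (hv0 : v 0 = vmax) (hvmax : 0 < vmax)
    (c : ℝ → ℝ) (hc : ContDiff ℝ 2 c)
    (hcmono : ∀ ρ ∈ Set.Icc (0 : ℝ) ρmax, 0 ≤ deriv c ρ)
    (hcconv : ∀ ρ ∈ Set.Ioc (0 : ℝ) ρmax, 0 < deriv (deriv c) ρ)
    (Υ : ℝ → ℝ) (hΥ : Υ = fun ρ => c ρ - ρ * deriv c ρ)
    (ρm ρp : ℝ) (hρm : 0 ≤ ρm) (hlt : ρm < ρp) (hρp : ρp ≤ ρmax) :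
    (1 / 2) * (vmax * (deriv c ρm * ρm - deriv c ρp * ρp) + v ρm * (Υ ρm - Υ ρp)) =
      (1 / 2) * ((vmax - v ρm) * (Υ ρp - Υ ρm) + vmax * (c ρm - c ρp)) ∧
    (1 / 2) * (vmax * (deriv c ρm * ρm - deriv c ρp * ρp) + v ρm * (Υ ρm - Υ ρp)) < 0 := by
  have hm : ρm ∈ Icc 0 ρmax := ⟨hρm, hlt.le.trans hρp⟩
  have hp : ρp ∈ Icc 0 ρmax := ⟨hρm.trans hlt.le, hρp⟩
  have hc₁ : Differentiable ℝ c := hc.differentiable two_ne_zero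
  have hc₂ : Differentiable ℝ (deriv c) := hc.differentiable_deriv_two
  have hconv : ∀ ρ ∈ Ioo 0 ρmax, 0 < deriv (deriv c) ρ := fun ρ hρ =>
    hcconv ρ (Ioo_subset_Ioc_self hρ)
  have hderiv_mono : StrictMonoOn (deriv c) (Icc 0 ρmax) :=
    strictMonoOn_of_deriv_pos (convex_Icc 0 ρmax) hc₂.continuous.continuousOn
      (by rwa [interior_Icc])
  have hc_lt : c ρm < c ρp :=
    strictMonoOn_of_strictMonoOn_deriv hc₁ hderiv_mono
      (hcmono 0 (left_mem_Icc.mpr (hp.1.trans hp.2))) hm hp hlt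
  have hΥ_lt : Υ ρp < Υ ρm := by
    subst hΥ
    exact strictAntiOn_tangentIntercept hc₁ hc₂ le_rfl hconv hm hp hlt
  have hv_le : v ρm ≤ vmax :=
    hv0 ▸ hvanti.antitoneOn (left_mem_Icc.mpr zero_le_one) ⟨hρm, (hm.2.trans_lt hρmax1).le⟩ hρm
  have hrearrange :
      (1 / 2) * (vmax * (deriv c ρm * ρm - deriv c ρp * ρp) + v ρm * (Υ ρm - Υ ρp)) =
        (1 / 2) * ((vmax - v ρm) * (Υ ρp - Υ ρm) + vmax * (c ρm - c ρp)) := by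
    subst hΥ
    ring
  refine ⟨hrearrange, hrearrange ▸ ?_⟩
  have hfirst : (vmax - v ρm) * (Υ ρp - Υ ρm) ≤ 0 :=
    mul_nonpos_of_nonneg_of_nonpos (sub_nonneg.mpr hv_le) (sub_neg.mpr hΥ_lt).le
  have hsecond : vmax * (c ρm - c ρp) < 0 := mul_neg_of_pos_of_neg hvmax (sub_neg.mpr hc_lt)
  linarith

/-- For Riemann data `ρ₋ < ρ₊` in `[0, ρ_max]`, the initial speed of the
turning point `ξ̇(0) = (1/2)·{v_max·[c' ρ₋ · ρ₋ − c' ρ₊ · ρ₊] + v ρ₋ · [Υ ρ₋ − Υ ρ₊]}`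
equals `(1/2)·{[v_max − v ρ₋]·[Υ ρ₊ − Υ ρ₋] + v_max·[c ρ₋ − c ρ₊]}` and is strictly
negative. -/
theorem riemann_turning_point_speed_neg
    (ρmax vmax : ℝ) (hρmax : 0 < ρmax) (hρmax1 : ρmax < 1)
    (v : ℝ → ℝ) (hv : ContDiff ℝ 1 v) (hvanti : StrictAntiOn v (Set.Icc 0 1))
    (hv0 : v 0 = vmax) (hvmax : 0 < vmax) (hvnonneg : ∀ ρ ∈ Set.Icc (0 : ℝ) 1, 0 ≤ v ρ)
    (c : ℝ → ℝ) (hc : ContDiff ℝ 2 c) (hc0 : c 0 = 1)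
    (hcmono : ∀ ρ ∈ Set.Icc (0 : ℝ) ρmax, 0 ≤ deriv c ρ)
    (hcconv : ∀ ρ ∈ Set.Ioc (0 : ℝ) ρmax, 0 < deriv (deriv c) ρ)
    (Υ : ℝ → ℝ) (hΥ : Υ = fun ρ => c ρ - ρ * deriv c ρ)
    (ρm ρp : ℝ) (hρm : 0 ≤ ρm) (hlt : ρm < ρp) (hρp : ρp ≤ ρmax) :
    (1 / 2) * (vmax * (deriv c ρm * ρm - deriv c ρp * ρp) + v ρm * (Υ ρm - Υ ρp)) =
      (1 / 2) * ((vmax - v ρm) * (Υ ρp - Υ ρm) + vmax * (c ρm - c ρp)) ∧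
    (1 / 2) * (vmax * (deriv c ρm * ρm - deriv c ρp * ρp) + v ρm * (Υ ρm - Υ ρp)) < 0 :=
  riemann_turning_point_speed_neg_general ρmax vmax hρmax1 v hvanti hv0 hvmax c hc hcmono hcconv Υ
    hΥ ρm ρp hρm hlt hρp
end

section
/- With c(ρ) = 1/(1−ρ) and v(ρ) = 1−ρ, if both ρ₋ and ρ₊ lie in [0, 1/2), then F(ρ₋, ρ₊) > 0 (the no-collision condition for the Riemann problem holds). -/
/-!
Since `c' ρ = (1 - ρ)⁻²`, `F` simplifies to
`(2 - ρ₊)(1 - 2ρ₊)/(1 - ρ₊) + ρ₋²/(1 - ρ₋)² + ρ₋(1 - 2ρ₊)/(1 - ρ₊)²`.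
For `ρ₊ < 1/2` the first term is positive, and for `ρ₋ ≥ 0` the other two are nonnegative.
-/

theorem hasDerivAt_inv_one_sub {𝕜 : Type*} [NontriviallyNormedField 𝕜] {x : 𝕜} (hx : x ≠ 1) :
    HasDerivAt (fun ρ : 𝕜 => (1 - ρ)⁻¹) ((1 - x) ^ 2)⁻¹ x := by
  have h : HasDerivAt (fun ρ : 𝕜 => (1 - ρ)⁻¹) (-(-1) / (1 - x) ^ 2) x :=
    ((hasDerivAt_id x).const_sub 1).inv (sub_ne_zero.mpr hx.symm)
  simpa using h

theorem deriv_inv_one_sub {𝕜 : Type*} [NontriviallyNormedField 𝕜] {x : 𝕜} (hx : x ≠ 1) :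
    deriv (fun ρ : 𝕜 => (1 - ρ)⁻¹) x = ((1 - x) ^ 2)⁻¹ :=
  (hasDerivAt_inv_one_sub hx).deriv

theorem noCollision_expr_eq_closedForm {ρm ρp : ℝ} (hm : ρm ≠ 1) (hp : ρp ≠ 1) :
    (1 - 0) * (((1 - ρm) ^ 2)⁻¹ * ρm - ((1 - ρp) ^ 2)⁻¹ * ρp) +
        (1 - ρm) * ((1 - ρm)⁻¹ - ρm * ((1 - ρm) ^ 2)⁻¹ -
          ((1 - ρp)⁻¹ - ρp * ((1 - ρp) ^ 2)⁻¹)) + 2 * (1 - ρp) =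
      (2 - ρp) * (1 - 2 * ρp) / (1 - ρp) + ρm ^ 2 / (1 - ρm) ^ 2 +
        ρm * (1 - 2 * ρp) / (1 - ρp) ^ 2 := by
  have hm' : 1 - ρm ≠ 0 := sub_ne_zero.mpr hm.symm
  have hp' : 1 - ρp ≠ 0 := sub_ne_zero.mpr hp.symm
  field_simp
  ring

theorem noCollision_closedForm_pos {ρm ρp : ℝ} (hm : 0 ≤ ρm) (hp : ρp < 1 / 2) :
    0 < (2 - ρp) * (1 - 2 * ρp) / (1 - ρp) + ρm ^ 2 / (1 - ρm) ^ 2 +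
        ρm * (1 - 2 * ρp) / (1 - ρp) ^ 2 := by
  have h2p : 0 < 1 - 2 * ρp := by linarith
  have hfirst : 0 < (2 - ρp) * (1 - 2 * ρp) / (1 - ρp) :=
    div_pos (mul_pos (by linarith) h2p) (by linarith)
  have hthird : 0 ≤ ρm * (1 - 2 * ρp) / (1 - ρp) ^ 2 := by positivity
  have hsecond : 0 ≤ ρm ^ 2 / (1 - ρm) ^ 2 := by positivity
  linarith

/-- With `c ρ = 1/(1−ρ)` and `v ρ = 1−ρ`, if both `ρ₋` and `ρ₊` lie in
`[0, 1/2)`, then `F ρ₋ ρ₊ > 0` (the no-collision condition for the Riemann problem). -/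
theorem no_collision_below_half
    (v c Υ : ℝ → ℝ) (F : ℝ → ℝ → ℝ)
    (hv : v = fun ρ => 1 - ρ) (hc : c = fun ρ => (1 - ρ)⁻¹)
    (hΥ : Υ = fun ρ => c ρ - ρ * deriv c ρ)
    (hF : F = fun ρm ρp =>
      v 0 * (deriv c ρm * ρm - deriv c ρp * ρp) + v ρm * (Υ ρm - Υ ρp) + 2 * v ρp) :
    ∀ ρm ∈ Set.Ico (0 : ℝ) (1 / 2), ∀ ρp ∈ Set.Ico (0 : ℝ) (1 / 2), 0 < F ρm ρp := by
  subst hv hc hΥ hF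
  rintro ρm ⟨hm0, hm1⟩ ρp ⟨-, hp1⟩
  have hm : ρm ≠ 1 := by linarith
  have hp : ρp ≠ 1 := by linarith
  simp only [deriv_inv_one_sub hm, deriv_inv_one_sub hp]
  rw [noCollision_expr_eq_closedForm hm hp]
  exact noCollision_closedForm_pos hm0 hp1
end

section
/- Discrete maximum principle for backward follow-the-leader: if initially m/(x̄_i − x̄_{i−1}) ≤ ρ_max for all i = 1,…,I₀ and v is C¹ decreasing with v(0) = v_max, then for all t ≥ 0 along the solution of ẋ₀ = −v_max, ẋ_i = −v(m/(x_i − x_{i−1})), the discrete densities satisfy m/(x_i(t) − x_{i−1}(t)) ≤ ρ_max; consequently ẋ_{I₀}(t) ≤ −v(ρ_max) for all t. -/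
open Set Filter Topology Real

/-!
Each gap `g = x i - x (i - 1)` obeys `ġ = -v (m / g) - ẋ (i - 1)`. If the vehicle ahead moves
with velocity at most `-v ρmax`, the constant `m / ρmax` is a subsolution of this equation, and
since `g ↦ v (m / g)` is locally Lipschitz near `m / ρmax`, a gap starting above that constant
never drops below it. Then `m / g ≤ ρmax`, so `ẋ i ≤ -v ρmax` because `v` is decreasing, and the
argument passes to the next vehicle; it starts at the leader, since `-vmax = -v 0 ≤ -v ρmax`.
-/

theorem le_image_of_deriv_right_ge_neg_mul_sub {g g' : ℝ → ℝ} {a b c δ L : ℝ}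
    (hg : ContinuousOn g (Icc a b)) (hg' : ∀ t ∈ Ico a b, HasDerivWithinAt g (g' t) (Ici t) t)
    (hδ : 0 < δ) (hL : 0 ≤ L)
    (bound : ∀ t ∈ Ico a b, g t ∈ Ioo (c - δ) c → -(L * (c - g t)) ≤ g' t)
    (ha : c ≤ g a) : ∀ t ∈ Icc a b, c ≤ g t := by
  intro t ht
  -- `g` stays above the fences `c - ε exp ((L + 1) (s - a))`, which are steeper than the bound.
  have fence : ∀ ε, 0 < ε → ε * exp ((L + 1) * (b - a)) < δ →
      c - ε * exp ((L + 1) * (t - a)) ≤ g t := by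
    intro ε hε hεδ
    have hB : ∀ s, HasDerivAt (fun s => ε * exp ((L + 1) * (s - a)) - c)
        (ε * (exp ((L + 1) * (s - a)) * ((L + 1) * 1))) s := fun s =>
      ((((hasDerivAt_id s).sub_const a).const_mul (L + 1)).exp.const_mul ε).sub_const c
    have key := image_le_of_deriv_right_lt_deriv_boundary' (f := fun s => -g s) hg.neg
      (fun s hs => (hg' s hs).neg) (by simp only [sub_self, mul_zero, exp_zero, mul_one]; linarith)
      (by fun_prop)
      (fun s _ => (hB s).hasDerivWithinAt) ?_ ht
    · linarith
    intro s hs hgs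
    have hE : 0 < ε * exp ((L + 1) * (s - a)) := by positivity
    have hEδ : ε * exp ((L + 1) * (s - a)) < δ := by
      refine lt_of_le_of_lt ?_ hεδ
      gcongr
      linarith [hs.2]
    have hbound := bound s hs ⟨by linarith, by linarith⟩
    nlinarith
  have hlim : Tendsto (fun ε => c - ε * exp ((L + 1) * (t - a))) (𝓝[>] 0) (𝓝 c) :=
    tendsto_nhdsWithin_of_tendsto_nhds <|
      (by fun_prop : Continuous fun ε : ℝ => c - ε * exp ((L + 1) * (t - a))).tendsto' 0 c
        (by simp)
  refine le_of_tendsto hlim ?_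
  filter_upwards [Ioo_mem_nhdsGT (div_pos hδ (exp_pos ((L + 1) * (b - a))))] with ε hε
  exact fence ε hε.1 ((lt_div_iff₀ (exp_pos _)).1 hε.2)

theorem le_gap_of_leader_deriv_le {v : ℝ → ℝ} {m ρ : ℝ} (hv : ContDiffAt ℝ 1 v ρ)
    (hm : m ≠ 0) (hρ : ρ ≠ 0) {y y' z : ℝ → ℝ} (hy : ∀ t, 0 ≤ t → HasDerivAt y (y' t) t)
    (hy' : ∀ t, 0 ≤ t → y' t ≤ -v ρ)
    (hz : ∀ t, 0 ≤ t → HasDerivAt z (-v (m / (z t - y t))) t) (h0 : m / ρ ≤ z 0 - y 0) :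
    ∀ t, 0 ≤ t → m / ρ ≤ z t - y t := by
  set c := m / ρ
  have hmc : m / c = ρ := by simp only [c]; field_simp
  have hF : ContDiffAt ℝ 1 (fun r => v (m / r)) c :=
    (hmc ▸ hv).comp c (contDiffAt_const.div contDiffAt_id (div_ne_zero hm hρ))
  obtain ⟨K, U, hU, hK⟩ := hF.exists_lipschitzOnWith
  obtain ⟨δ, hδ, hball⟩ := Metric.mem_nhds_iff.1 hU
  have hgap : ∀ t, 0 ≤ t → HasDerivAt (fun s => z s - y s) (-v (m / (z t - y t)) - y' t) t :=
    fun t ht => (hz t ht).sub (hy t ht)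
  intro t ht
  refine le_image_of_deriv_right_ge_neg_mul_sub
    (fun s hs => (hgap s hs.1).continuousAt.continuousWithinAt)
    (fun s hs => (hgap s hs.1).hasDerivWithinAt) hδ K.coe_nonneg ?_ h0 t ⟨ht, le_rfl⟩
  intro s hs hgs
  have hsU : z s - y s ∈ U := hball <| by
    rw [Metric.mem_ball, Real.dist_eq, abs_sub_lt_iff]
    constructor <;> linarith [hgs.1, hgs.2]
  have hlip := hK.dist_le_mul _ hsU _ (hball (Metric.mem_ball_self hδ))
  rw [Real.dist_eq, Real.dist_eq, hmc, abs_sub_comm (z s - y s),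
    abs_of_pos (sub_pos.2 hgs.2)] at hlip
  linarith [le_abs_self (v (m / (z s - y s)) - v ρ), hy' s hs.1]

theorem div_mem_Icc_of_div_le {m ρ d : ℝ} (hm : 0 < m) (hρ : 0 < ρ) (h : m / ρ ≤ d) :
    m / d ∈ Icc 0 ρ := by
  have hd : 0 < d := (div_pos hm hρ).trans_le h
  rw [div_le_iff₀ hρ] at h
  exact ⟨by positivity, (div_le_iff₀ hd).2 (by linarith)⟩

theorem discrete_maximum_principle_general
    (v : ℝ → ℝ) (vmax : ℝ) (hv : ContDiff ℝ 1 v) (hvanti : StrictAntiOn v (Set.Icc 0 1))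
    (hv0 : v 0 = vmax)
    (m ρmax : ℝ) (hm : 0 < m) (hρmax : ρmax ∈ Set.Ioc (0 : ℝ) 1)
    (I₀ : ℕ) (hI₀ : 1 ≤ I₀) (xbar : ℕ → ℝ)
    (hgap : ∀ i : ℕ, 1 ≤ i → i ≤ I₀ → m / ρmax ≤ xbar i - xbar (i - 1))
    (x : ℕ → ℝ → ℝ) (hinit : ∀ i : ℕ, i ≤ I₀ → x i 0 = xbar i)
    (hODE0 : ∀ t : ℝ, 0 ≤ t → HasDerivAt (x 0) (-vmax) t)
    (hODE : ∀ i : ℕ, 1 ≤ i → i ≤ I₀ → ∀ t : ℝ, 0 ≤ t →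
      HasDerivAt (x i) (-(v (m / (x i t - x (i - 1) t)))) t) :
    (∀ t : ℝ, 0 ≤ t → ∀ i : ℕ, 1 ≤ i → i ≤ I₀ →
        m / (x i t - x (i - 1) t) ≤ ρmax) ∧
      ∀ t : ℝ, 0 ≤ t → -(v (m / (x I₀ t - x (I₀ - 1) t))) ≤ -(v ρmax) := by
  obtain ⟨hρ0, hρ1⟩ := hρmax
  have hvρ : ∀ r ∈ Icc 0 ρmax, v ρmax ≤ v r := fun r hr =>
    hvanti.antitoneOn ⟨hr.1, hr.2.trans hρ1⟩ ⟨hρ0.le, hρ1⟩ hr.2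
  have gap_ge : ∀ i, 1 ≤ i → i ≤ I₀ → ∀ t, 0 ≤ t → m / ρmax ≤ x i t - x (i - 1) t := by
    intro i hi
    induction i, hi using Nat.le_induction with
    | base =>
      intro hI
      refine le_gap_of_leader_deriv_le hv.contDiffAt hm.ne' hρ0.ne' hODE0
        (fun _ _ => ?_) (hODE 1 le_rfl hI) ?_
      · simpa [← hv0] using hvρ 0 ⟨le_rfl, hρ0.le⟩
      · simpa [hinit 0 (Nat.zero_le _), hinit 1 hI] using hgap 1 le_rfl hI
    | succ n hn ih =>
      intro hI
      have hnI : n ≤ I₀ := by omega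
      refine le_gap_of_leader_deriv_le hv.contDiffAt hm.ne' hρ0.ne' (hODE n hn hnI)
        (fun t ht => neg_le_neg (hvρ _ (div_mem_Icc_of_div_le hm hρ0 (ih hnI t ht))))
        (hODE (n + 1) (by omega) hI) ?_
      simpa [hinit n hnI, hinit (n + 1) hI] using hgap (n + 1) (by omega) hI
  have density_mem : ∀ t, 0 ≤ t → ∀ i, 1 ≤ i → i ≤ I₀ → m / (x i t - x (i - 1) t) ∈ Icc 0 ρmax :=
    fun t ht i h1 hi => div_mem_Icc_of_div_le hm hρ0 (gap_ge i h1 hi t ht)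
  exact ⟨fun t ht i h1 hi => (density_mem t ht i h1 hi).2,
    fun t ht => neg_le_neg (hvρ _ (density_mem t ht I₀ hI₀ le_rfl))⟩

/-- Discrete maximum principle for the backward follow-the-leader scheme:
if initially `m/(x̄ᵢ − x̄ᵢ₋₁) ≤ ρ_max` for `i = 1, …, I₀` and `v` is C¹, strictly
decreasing with `v 0 = v_max`, then along the solution of `ẋ₀ = −v_max`,
`ẋᵢ = −v(m/(xᵢ − xᵢ₋₁))`, the discrete densities satisfy `m/(xᵢ t − xᵢ₋₁ t) ≤ ρ_max`
for all `t ≥ 0`; consequently `ẋ_{I₀} t ≤ −v ρ_max` for all `t ≥ 0`. -/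
theorem discrete_maximum_principle
    (v : ℝ → ℝ) (vmax : ℝ) (hv : ContDiff ℝ 1 v) (hvanti : StrictAntiOn v (Set.Icc 0 1))
    (hv0 : v 0 = vmax) (hvmax : 0 < vmax)
    (m ρmax : ℝ) (hm : 0 < m) (hρmax : ρmax ∈ Set.Ioc (0 : ℝ) 1)
    (I₀ : ℕ) (hI₀ : 1 ≤ I₀) (xbar : ℕ → ℝ)
    (hgap : ∀ i : ℕ, 1 ≤ i → i ≤ I₀ → m / ρmax ≤ xbar i - xbar (i - 1))
    (x : ℕ → ℝ → ℝ) (hinit : ∀ i : ℕ, i ≤ I₀ → x i 0 = xbar i)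
    (hODE0 : ∀ t : ℝ, 0 ≤ t → HasDerivAt (x 0) (-vmax) t)
    (hODE : ∀ i : ℕ, 1 ≤ i → i ≤ I₀ → ∀ t : ℝ, 0 ≤ t →
      HasDerivAt (x i) (-(v (m / (x i t - x (i - 1) t)))) t) :
    (∀ t : ℝ, 0 ≤ t → ∀ i : ℕ, 1 ≤ i → i ≤ I₀ →
        m / (x i t - x (i - 1) t) ≤ ρmax) ∧
      ∀ t : ℝ, 0 ≤ t → -(v (m / (x I₀ t - x (I₀ - 1) t))) ≤ -(v ρmax) :=
  discrete_maximum_principle_general v vmax hv hvanti hv0 m ρmax hm hρmax I₀ hI₀ xbar hgap x hinit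
    hODE0 hODE
end

section
/- For the Riemann problem in the case c(ρ) = 1/(1−ρ), there exists a strictly increasing function φ : [0,1) → (0,1] with φ(0) = 1/2 and lim_{ρ→1} φ(ρ) = 1 such that F(ρ₋, ρ₊) > 0 holds for ρ₋ ≤ ρ₊ if and only if ρ₊ < φ(ρ₋). -/
/-!
Multiplying by `1 - ρ₊ > 0` and writing `v = 1 - ρ₊`, the sign of `F ρ₋ ρ₊` is the sign of
`scaledF ρ₋ v = 2v² + v - 1 + ρ₋² v / (1 - ρ₋)² + 2ρ₋ - ρ₋ / v`. This is strictly increasing in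
`v > 0`, negative at `v = (1 - ρ₋)² / 4` and positive at `v = 1`, so it has a unique root
`criticalVelocity ρ₋ ∈ (0, 1)` and `φ = 1 - criticalVelocity`. The root strictly decreases in `ρ₋`,
and it tends to `0` as `ρ₋ → 1` because the coefficient `ρ₋² / (1 - ρ₋)²` of `v` blows up.
-/

open Set Filter Topology

noncomputable def scaledF (ρ v : ℝ) : ℝ :=
  2 * v ^ 2 + v - 1 + ρ ^ 2 / (1 - ρ) ^ 2 * v + 2 * ρ - ρ / v

lemma mul_one_sub_eq_scaledF {ρm ρp : ℝ} (hp : ρp ≠ 1) :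
    ((2 - ρp) * (1 - 2 * ρp) / (1 - ρp) + ρm ^ 2 / (1 - ρm) ^ 2 +
      ρm * (1 - 2 * ρp) / (1 - ρp) ^ 2) * (1 - ρp) = scaledF ρm (1 - ρp) := by
  have : 1 - ρp ≠ 0 := sub_ne_zero.2 hp.symm
  unfold scaledF
  field_simp
  ring

lemma scaledF_strictMonoOn {ρ : ℝ} (hρ : 0 ≤ ρ) : StrictMonoOn (scaledF ρ) (Ioi 0) := by
  intro v hv w hw hvw
  have : ρ / w ≤ ρ / v := div_le_div_of_nonneg_left hρ hv hvw.le
  have : ρ ^ 2 / (1 - ρ) ^ 2 * v ≤ ρ ^ 2 / (1 - ρ) ^ 2 * w := by gcongr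
  have : v ^ 2 < w ^ 2 := pow_lt_pow_left₀ hvw (mem_Ioi.1 hv).le two_ne_zero
  unfold scaledF
  linarith

lemma scaledF_continuousOn (ρ : ℝ) : ContinuousOn (scaledF ρ) (Ioi 0) := by
  unfold scaledF
  fun_prop (disch := exact fun v hv => (mem_Ioi.1 hv).ne')

lemma exists_scaledF_eq_zero {ρ : ℝ} (h0 : 0 ≤ ρ) (h1 : ρ < 1) :
    ∃ v ∈ Ioo 0 1, scaledF ρ v = 0 := by
  set t := (1 - ρ) ^ 2 / 4
  have ht0 : 0 < t := by positivity
  have ht1 : t ≤ 1 / 4 := by simp only [t]; nlinarith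
  -- at `v = (1 - ρ)² / 4` the term `ρ² v / (1 - ρ)²` is only `ρ² / 4` while `ρ / v ≥ 4ρ`
  have hneg : scaledF ρ t < 0 := by
    have : ρ ^ 2 / (1 - ρ) ^ 2 * t = ρ ^ 2 / 4 := by
      simp only [t]; field_simp [(sub_pos.2 h1).ne']
    have : 4 * ρ ≤ ρ / t := by
      rw [le_div_iff₀ ht0]; nlinarith
    unfold scaledF
    nlinarith
  have hpos : 0 < scaledF ρ 1 := by
    unfold scaledF
    have : 0 ≤ ρ ^ 2 / (1 - ρ) ^ 2 := by positivity
    rw [div_one]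
    linarith
  obtain ⟨v, hv, hv0⟩ := intermediate_value_Ioo (by linarith : t ≤ 1)
    ((scaledF_continuousOn ρ).mono fun w hw => ht0.trans_le hw.1) ⟨hneg, hpos⟩
  exact ⟨v, ⟨ht0.trans hv.1, hv.2⟩, hv0⟩

noncomputable def criticalVelocity (ρ : ℝ) : ℝ :=
  if h : 0 ≤ ρ ∧ ρ < 1 then (exists_scaledF_eq_zero h.1 h.2).choose else 0

lemma criticalVelocity_spec {ρ : ℝ} (h0 : 0 ≤ ρ) (h1 : ρ < 1) :
    criticalVelocity ρ ∈ Ioo 0 1 ∧ scaledF ρ (criticalVelocity ρ) = 0 := by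
  rw [criticalVelocity, dif_pos ⟨h0, h1⟩]
  exact (exists_scaledF_eq_zero h0 h1).choose_spec

lemma zero_lt_scaledF_iff {ρ v : ℝ} (h0 : 0 ≤ ρ) (h1 : ρ < 1) (hv : 0 < v) :
    0 < scaledF ρ v ↔ criticalVelocity ρ < v := by
  obtain ⟨hmem, hzero⟩ := criticalVelocity_spec h0 h1
  rw [← hzero]
  exact (scaledF_strictMonoOn h0).lt_iff_lt hmem.1 hv

lemma criticalVelocity_zero : criticalVelocity 0 = 1 / 2 := by
  obtain ⟨hmem, hzero⟩ := criticalVelocity_spec le_rfl one_pos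
  refine (scaledF_strictMonoOn le_rfl).injOn hmem.1 (by norm_num : (0 : ℝ) < 1 / 2) ?_
  rw [hzero]
  norm_num [scaledF]

lemma scaledF_pos_of_lt {ρ₁ ρ₂ v : ℝ} (h0 : 0 ≤ ρ₁) (h12 : ρ₁ < ρ₂) (h2 : ρ₂ < 1) (hv : 0 < v)
    (hnonneg : 0 ≤ scaledF ρ₁ v) : 0 < scaledF ρ₂ v := by
  have hd₁ : 0 < (1 - ρ₁) ^ 2 := by nlinarith
  have hd₂ : 0 < (1 - ρ₂) ^ 2 := by nlinarith
  rcases le_or_gt (1 / 2) v with hv2 | hv2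
  · -- for `v ≥ 1/2` both `ρ`-dependent terms increase with `ρ`
    have ha : ρ₁ ^ 2 / (1 - ρ₁) ^ 2 < ρ₂ ^ 2 / (1 - ρ₂) ^ 2 := by
      rw [div_lt_div_iff₀ hd₁ hd₂]
      nlinarith [mul_pos (sub_pos.2 h12) (show 0 < ρ₂ * (1 - ρ₁) + ρ₁ * (1 - ρ₂) by nlinarith)]
    have hdiff : scaledF ρ₂ v - scaledF ρ₁ v
        = (ρ₂ ^ 2 / (1 - ρ₂) ^ 2 - ρ₁ ^ 2 / (1 - ρ₁) ^ 2) * v + (ρ₂ - ρ₁) * (2 - 1 / v) := by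
      unfold scaledF; ring
    have : 1 / v ≤ 2 := by rw [div_le_iff₀ hv]; linarith
    nlinarith [mul_pos (sub_pos.2 ha) hv, mul_nonneg (sub_pos.2 h12).le (sub_nonneg.2 this)]
  · -- for `v < 1/2` compare along the chord through `ρ = 0`, where `scaledF 0 v < 0`
    have hc : ρ₂ * (ρ₁ ^ 2 / (1 - ρ₁) ^ 2) ≤ ρ₁ * (ρ₂ ^ 2 / (1 - ρ₂) ^ 2) := by
      rw [mul_div_assoc', mul_div_assoc', div_le_div_iff₀ hd₁ hd₂]
      nlinarith [mul_nonneg (mul_nonneg (mul_nonneg h0 (h0.trans h12.le)) (sub_pos.2 h12).le)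
        (by nlinarith : (0 : ℝ) ≤ 1 - ρ₁ * ρ₂)]
    have hchord : ρ₂ * scaledF ρ₁ v - ρ₁ * scaledF ρ₂ v
        = (ρ₂ - ρ₁) * (2 * v ^ 2 + v - 1)
          + (ρ₂ * (ρ₁ ^ 2 / (1 - ρ₁) ^ 2) - ρ₁ * (ρ₂ ^ 2 / (1 - ρ₂) ^ 2)) * v := by
      unfold scaledF; ring
    have : ρ₂ * scaledF ρ₁ v - ρ₁ * scaledF ρ₂ v < 0 := by
      rw [hchord]
      nlinarith [mul_pos (sub_pos.2 h12) (by nlinarith : 0 < 1 - v - 2 * v ^ 2),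
        mul_nonneg (sub_nonneg.2 hc) hv.le]
    exact pos_of_mul_pos_right (by nlinarith [mul_nonneg (h0.trans h12.le) hnonneg]) h0

lemma criticalVelocity_strictAntiOn : StrictAntiOn criticalVelocity (Ico 0 1) := by
  intro ρ₁ h₁ ρ₂ h₂ h12
  obtain ⟨hmem, hzero⟩ := criticalVelocity_spec h₁.1 h₁.2
  exact (zero_lt_scaledF_iff h₂.1 h₂.2 hmem.1).1
    (scaledF_pos_of_lt h₁.1 h12 h₂.2 hmem.1 hzero.ge)

lemma tendsto_sq_div_one_sub_sq : Tendsto (fun ρ : ℝ => ρ ^ 2 / (1 - ρ) ^ 2) (𝓝[<] 1) atTop := by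
  have hsub : Tendsto (fun ρ : ℝ => 1 - ρ) (𝓝[<] 1) (𝓝[>] 0) := by
    refine tendsto_nhdsWithin_iff.2 ⟨?_, ?_⟩
    · exact ((continuous_sub_left 1).tendsto' 1 0 (sub_self 1)).mono_left nhdsWithin_le_nhds
    · filter_upwards [self_mem_nhdsWithin] with ρ hρ using sub_pos.2 (mem_Iio.1 hρ)
  have hquot : Tendsto (fun ρ : ℝ => ρ * (1 - ρ)⁻¹) (𝓝[<] 1) atTop :=
    (tendsto_nhdsWithin_of_tendsto_nhds tendsto_id).pos_mul_atTop one_pos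
      (tendsto_inv_nhdsGT_zero.comp hsub)
  convert hquot.atTop_mul_atTop₀ hquot using 1
  funext ρ
  rw [← div_pow, div_eq_mul_inv, sq]

lemma tendsto_criticalVelocity : Tendsto criticalVelocity (𝓝[<] 1) (𝓝 0) := by
  have hIoo : Ioo 0 1 ∈ 𝓝[<] (1 : ℝ) := Ioo_mem_nhdsLT one_pos
  refine tendsto_order.2 ⟨fun b hb => ?_, fun ε hε => ?_⟩
  · filter_upwards [hIoo] with ρ hρ
    exact hb.trans (criticalVelocity_spec hρ.1.le hρ.2).1.1
  · filter_upwards [hIoo, tendsto_sq_div_one_sub_sq.eventually_gt_atTop ((1 + 1 / ε) / ε)]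
      with ρ hρ ha
    refine (zero_lt_scaledF_iff hρ.1.le hρ.2 hε).1 ?_
    have hcancel : (1 + 1 / ε) / ε * ε = 1 + 1 / ε := by field_simp
    have hρε : ρ / ε ≤ 1 / ε := by gcongr; exact hρ.2.le
    have := mul_lt_mul_of_pos_right ha hε
    unfold scaledF
    nlinarith [hρ.1]

/-- For the Riemann problem with `c ρ = 1/(1−ρ)`, there exists a strictly
increasing `φ : [0,1) → (0,1]` with `φ 0 = 1/2` and `φ ρ → 1` as `ρ → 1⁻`, such that for
`ρ₋ ≤ ρ₊` the no-collision condition `F ρ₋ ρ₊ > 0` holds iff `ρ₊ < φ ρ₋`. -/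
theorem exists_threshold_curve
    (F : ℝ → ℝ → ℝ)
    (hF : F = fun ρm ρp => (2 - ρp) * (1 - 2 * ρp) / (1 - ρp) + ρm ^ 2 / (1 - ρm) ^ 2 +
      ρm * (1 - 2 * ρp) / (1 - ρp) ^ 2) :
    ∃ φ : ℝ → ℝ,
      StrictMonoOn φ (Set.Ico (0 : ℝ) 1) ∧
      φ 0 = 1 / 2 ∧
      Filter.Tendsto φ (nhdsWithin 1 (Set.Iio 1)) (nhds 1) ∧
      (∀ ρ ∈ Set.Ico (0 : ℝ) 1, φ ρ ∈ Set.Ioc (0 : ℝ) 1) ∧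
      ∀ ρm ρp : ℝ, 0 ≤ ρm → ρm ≤ ρp → ρp < 1 → (0 < F ρm ρp ↔ ρp < φ ρm) := by
  refine ⟨fun ρ => 1 - criticalVelocity ρ, fun a ha b hb hab => ?_, ?_, ?_, fun ρ hρ => ?_, ?_⟩
  · exact sub_lt_sub_left (criticalVelocity_strictAntiOn ha hb hab) 1
  · norm_num [criticalVelocity_zero]
  · simpa using tendsto_criticalVelocity.const_sub 1
  · obtain ⟨⟨hpos, hlt⟩, -⟩ := criticalVelocity_spec hρ.1 hρ.2
    constructor <;> linarith
  · intro ρm ρp h0 hmp hp1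
    have hv : 0 < 1 - ρp := sub_pos.2 hp1
    rw [hF, ← mul_pos_iff_of_pos_right hv, mul_one_sub_eq_scaledF hp1.ne,
      zero_lt_scaledF_iff h0 (hmp.trans_lt hp1) hv, lt_sub_comm]
end

section
/- Continuity and strict monotonicity of the turning-point functional: if R₁, R₂ : [−1,1] → [0, ρ_max] are measurable with c ∘ R_j integrable, and ξ_j denotes the unique solution of ∫_{−1}^{ξ_j} c(R_j) = ∫_{ξ_j}^{1} c(R_j), then |ξ₁ − ξ₂| ≤ (1/2)·‖c(R₁(·)) − c(R₂(·))‖_{L¹(−1,1)}, using that c ≥ 1. -/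
open Set MeasureTheory

/-!
With the balance `G_f(ξ) = ∫_{(a,ξ]} f - ∫_{(ξ,b]} f`, `ξ₁` and `ξ₂` are the zeros of `G_f` and `G_g`.
For `ξ₁ ≤ ξ₂` the increment `G_f(ξ₂) - G_f(ξ₁) = 2 ∫_{(ξ₁,ξ₂]} f` is at least `2 (ξ₂ - ξ₁)` because
`f ≥ 1`, while it also equals `G_f(ξ₂) - G_g(ξ₂)`, which is at most `‖f - g‖_{L¹(a,b)}`.
-/

noncomputable def turningBalance (f : ℝ → ℝ) (a b ξ : ℝ) : ℝ :=
  (∫ y in Ioc a ξ, f y) - ∫ y in Ioc ξ b, f y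

theorem setIntegral_Ioc_add_Ioc {f : ℝ → ℝ} {a b c : ℝ} (hab : a ≤ b) (hbc : b ≤ c)
    (hf : IntegrableOn f (Ioc a c)) :
    (∫ y in Ioc a b, f y) + ∫ y in Ioc b c, f y = ∫ y in Ioc a c, f y := by
  rw [← Ioc_union_Ioc_eq_Ioc hab hbc] at hf ⊢
  exact (setIntegral_union (Ioc_disjoint_Ioc_of_le le_rfl) measurableSet_Ioc
    (hf.mono_set subset_union_left) (hf.mono_set subset_union_right)).symm

section TurningBalance

variable {f g : ℝ → ℝ} {a b ξ η : ℝ}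

theorem turningBalance_sub (hf : IntegrableOn f (Ioc a b)) (hg : IntegrableOn g (Ioc a b))
    (haξ : a ≤ ξ) (hξb : ξ ≤ b) :
    turningBalance f a b ξ - turningBalance g a b ξ = turningBalance (fun y => f y - g y) a b ξ := by
  have hlow : Ioc a ξ ⊆ Ioc a b := Ioc_subset_Ioc_right hξb
  have hupp : Ioc ξ b ⊆ Ioc a b := Ioc_subset_Ioc_left haξ
  simp only [turningBalance]
  rw [integral_sub (hf.mono_set hlow) (hg.mono_set hlow),
    integral_sub (hf.mono_set hupp) (hg.mono_set hupp)]
  ring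

theorem abs_turningBalance_le (hf : IntegrableOn f (Ioc a b)) (haξ : a ≤ ξ) (hξb : ξ ≤ b) :
    |turningBalance f a b ξ| ≤ ∫ y in Ioc a b, |f y| := by
  rw [← setIntegral_Ioc_add_Ioc haξ hξb hf.abs]
  calc |turningBalance f a b ξ|
      ≤ |∫ y in Ioc a ξ, f y| + |∫ y in Ioc ξ b, f y| := abs_sub _ _
    _ ≤ (∫ y in Ioc a ξ, |f y|) + ∫ y in Ioc ξ b, |f y| :=
      add_le_add abs_integral_le_integral_abs abs_integral_le_integral_abs

theorem abs_turningBalance_sub_le (hf : IntegrableOn f (Ioc a b)) (hg : IntegrableOn g (Ioc a b))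
    (haξ : a ≤ ξ) (hξb : ξ ≤ b) :
    |turningBalance f a b ξ - turningBalance g a b ξ| ≤ ∫ y in Ioc a b, |f y - g y| := by
  rw [turningBalance_sub hf hg haξ hξb]
  exact abs_turningBalance_le (hf.sub hg) haξ hξb

theorem turningBalance_sub_turningBalance (hf : IntegrableOn f (Ioc a b))
    (haξ : a ≤ ξ) (hξη : ξ ≤ η) (hηb : η ≤ b) :
    turningBalance f a b η - turningBalance f a b ξ = 2 * ∫ y in Ioc ξ η, f y := by
  have hlow := setIntegral_Ioc_add_Ioc haξ hξη (hf.mono_set (Ioc_subset_Ioc_right hηb))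
  have hupp := setIntegral_Ioc_add_Ioc hξη hηb (hf.mono_set (Ioc_subset_Ioc_left haξ))
  simp only [turningBalance]
  linarith

theorem mul_sub_le_turningBalance_sub {m : ℝ} (hf : IntegrableOn f (Ioc a b))
    (haξ : a ≤ ξ) (hξη : ξ ≤ η) (hηb : η ≤ b) (hm : ∀ y ∈ Ioc ξ η, m ≤ f y) :
    2 * (m * (η - ξ)) ≤ turningBalance f a b η - turningBalance f a b ξ := by
  rw [turningBalance_sub_turningBalance hf haξ hξη hηb]
  have hmeas : volume.real (Ioc ξ η) = η - ξ := by
    simp [measureReal_def, Real.volume_Ioc, sub_nonneg.2 hξη]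
  have := setIntegral_ge_of_const_le_real measurableSet_Ioc (by simp [Real.volume_Ioc]) hm
    (hf.mono_set (Ioc_subset_Ioc haξ hηb))
  rw [hmeas] at this
  linarith

theorem sub_le_of_turningBalance_eq_zero (hf : IntegrableOn f (Ioc a b))
    (hg : IntegrableOn g (Ioc a b)) (hf1 : ∀ y ∈ Ioc a b, 1 ≤ f y)
    (haξ : a ≤ ξ) (hξη : ξ ≤ η) (hηb : η ≤ b)
    (hfξ : turningBalance f a b ξ = 0) (hgη : turningBalance g a b η = 0) :
    η - ξ ≤ 1 / 2 * ∫ y in Ioc a b, |f y - g y| := by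
  have hf1' : ∀ y ∈ Ioc ξ η, 1 ≤ f y := fun y hy => hf1 y (Ioc_subset_Ioc haξ hηb hy)
  have hincr := mul_sub_le_turningBalance_sub hf haξ hξη hηb hf1'
  have hclose := abs_turningBalance_sub_le hf hg (haξ.trans hξη) hηb
  rw [hfξ, sub_zero] at hincr
  rw [hgη, sub_zero] at hclose
  linarith [le_abs_self (turningBalance f a b η)]

theorem abs_sub_le_of_turningBalance_eq_zero (hf : IntegrableOn f (Ioc a b))
    (hg : IntegrableOn g (Ioc a b)) (hf1 : ∀ y ∈ Ioc a b, 1 ≤ f y) (hg1 : ∀ y ∈ Ioc a b, 1 ≤ g y)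
    (hξ : ξ ∈ Icc a b) (hη : η ∈ Icc a b)
    (hfξ : turningBalance f a b ξ = 0) (hgη : turningBalance g a b η = 0) :
    |ξ - η| ≤ 1 / 2 * ∫ y in Ioc a b, |f y - g y| := by
  rcases le_total ξ η with hξη | hηξ
  · rw [abs_sub_comm, abs_of_nonneg (sub_nonneg.2 hξη)]
    exact sub_le_of_turningBalance_eq_zero hf hg hf1 hξ.1 hξη hη.2 hfξ hgη
  · rw [abs_of_nonneg (sub_nonneg.2 hηξ)]
    simpa only [abs_sub_comm (g _)] using
      sub_le_of_turningBalance_eq_zero hg hf hg1 hη.1 hηξ hξ.2 hgη hfξ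

end TurningBalance

theorem turning_point_stability_general
    (ρmax : ℝ)
    (c : ℝ → ℝ)
    (hc1 : ∀ ρ ∈ Set.Icc (0 : ℝ) ρmax, 1 ≤ c ρ)
    (R₁ R₂ : ℝ → ℝ)
    (hR₁range : ∀ y ∈ Set.Icc (-1 : ℝ) 1, R₁ y ∈ Set.Icc 0 ρmax)
    (hR₂range : ∀ y ∈ Set.Icc (-1 : ℝ) 1, R₂ y ∈ Set.Icc 0 ρmax)
    (hint₁ : IntegrableOn (fun y => c (R₁ y)) (Set.Icc (-1 : ℝ) 1))
    (hint₂ : IntegrableOn (fun y => c (R₂ y)) (Set.Icc (-1 : ℝ) 1))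
    (ξ₁ ξ₂ : ℝ) (hξ₁mem : ξ₁ ∈ Set.Ioo (-1 : ℝ) 1) (hξ₂mem : ξ₂ ∈ Set.Ioo (-1 : ℝ) 1)
    (hξ₁ : (∫ y in Set.Ioc (-1 : ℝ) ξ₁, c (R₁ y)) = ∫ y in Set.Ioc ξ₁ (1 : ℝ), c (R₁ y))
    (hξ₂ : (∫ y in Set.Ioc (-1 : ℝ) ξ₂, c (R₂ y)) = ∫ y in Set.Ioc ξ₂ (1 : ℝ), c (R₂ y)) :
    |ξ₁ - ξ₂| ≤ (1 / 2) * ∫ y in Set.Ioc (-1 : ℝ) 1, |c (R₁ y) - c (R₂ y)| := by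
  exact abs_sub_le_of_turningBalance_eq_zero
    (hint₁.mono_set Ioc_subset_Icc_self) (hint₂.mono_set Ioc_subset_Icc_self)
    (fun y hy => hc1 _ (hR₁range y (Ioc_subset_Icc_self hy)))
    (fun y hy => hc1 _ (hR₂range y (Ioc_subset_Icc_self hy)))
    (Ioo_subset_Icc_self hξ₁mem) (Ioo_subset_Icc_self hξ₂mem)
    (sub_eq_zero.2 hξ₁) (sub_eq_zero.2 hξ₂)

/-- Continuity (and stability) of the turning-point functional: if
`R₁, R₂ : [−1,1] → [0, ρ_max]` are measurable with `c ∘ Rⱼ` integrable and `c ≥ 1`, and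
`ξⱼ ∈ (−1,1)` is the unique solution of `∫_{−1}^{ξⱼ} c(Rⱼ) = ∫_{ξⱼ}^{1} c(Rⱼ)`, then
`|ξ₁ − ξ₂| ≤ (1/2)·‖c(R₁(·)) − c(R₂(·))‖_{L¹(−1,1)}`. -/
theorem turning_point_stability
    (ρmax : ℝ) (hρmax : ρmax ∈ Set.Ioc (0 : ℝ) 1)
    (c : ℝ → ℝ) (hccont : ContinuousOn c (Set.Icc 0 ρmax))
    (hc1 : ∀ ρ ∈ Set.Icc (0 : ℝ) ρmax, 1 ≤ c ρ)
    (R₁ R₂ : ℝ → ℝ) (hR₁ : Measurable R₁) (hR₂ : Measurable R₂)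
    (hR₁range : ∀ y ∈ Set.Icc (-1 : ℝ) 1, R₁ y ∈ Set.Icc 0 ρmax)
    (hR₂range : ∀ y ∈ Set.Icc (-1 : ℝ) 1, R₂ y ∈ Set.Icc 0 ρmax)
    (hint₁ : IntegrableOn (fun y => c (R₁ y)) (Set.Icc (-1 : ℝ) 1))
    (hint₂ : IntegrableOn (fun y => c (R₂ y)) (Set.Icc (-1 : ℝ) 1))
    (ξ₁ ξ₂ : ℝ) (hξ₁mem : ξ₁ ∈ Set.Ioo (-1 : ℝ) 1) (hξ₂mem : ξ₂ ∈ Set.Ioo (-1 : ℝ) 1)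
    (hξ₁ : (∫ y in Set.Ioc (-1 : ℝ) ξ₁, c (R₁ y)) = ∫ y in Set.Ioc ξ₁ (1 : ℝ), c (R₁ y))
    (hξ₂ : (∫ y in Set.Ioc (-1 : ℝ) ξ₂, c (R₂ y)) = ∫ y in Set.Ioc ξ₂ (1 : ℝ), c (R₂ y)) :
    |ξ₁ - ξ₂| ≤ (1 / 2) * ∫ y in Set.Ioc (-1 : ℝ) 1, |c (R₁ y) - c (R₂ y)| :=
  turning_point_stability_general ρmax c hc1 R₁ R₂ hR₁range hR₂range hint₁ hint₂ ξ₁ ξ₂ hξ₁mem hξ₂mem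
    hξ₁ hξ₂
end
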